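/- arXiv:1604.07911 — 2 statements merged into one kernel-verified Lean document; each statement's English description precedes it below -/
import Mathlib

section
/- Let π satisfy Assumption 1 with constants ε_π, δ_π, and let c : (0,1) → [0,∞) be a decreasing function with ∫_0^1 c(ε)π(ε) dε < ∞. Let n ≥ 1 and let x_1,...,x_n be reals with x_i ≥ -1 for all i. If S_n > 0, S_n²/A_n² > max(2, 1/ε_π) and S_n³/A_n⁴ < 1/2, then K_n^{cπ} ≥ c(u_n)·(1/(6e))·(1/A_n)·π(S_n/A_n²)·exp(S_n²/(2·A_n²)), where u_n = ((1 + A_n/S_n)/(1 + A_n²/S_n²))·(S_n/A_n²) and K_n^{cπ} = ∫_0^1 ∏_{i=1}^n (1 + ε x_i)·c(ε)·π(ε) dε. -/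
open MeasureTheory Filter Set

/-- Partial sum `S_n = x_1 + ... + x_n`. -/
noncomputable def S (x : ℕ → ℝ) (n : ℕ) : ℝ := ∑ i ∈ Finset.range n, x i

/-- Sum of squares `A_n² = x_1² + ... + x_n²`. -/
noncomputable def A2 (x : ℕ → ℝ) (n : ℕ) : ℝ := ∑ i ∈ Finset.range n, (x i) ^ 2

/-- Capital process of the Bayesian strategy with prior density `π`:
`K_n^π = ∫_0^1 ∏_{i=1}^n (1 + ε x_i) π(ε) dε`. -/
noncomputable def K (π : ℝ → ℝ) (x : ℕ → ℝ) (n : ℕ) : ℝ :=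
  ∫ ε in Set.Ioo (0 : ℝ) 1, (∏ i ∈ Finset.range n, (1 + ε * x i)) * π ε

/-- Assumption 1: `π` is a prior density, bounded below by `δπ` near the origin,
and `ε ↦ ε·π(ε)` is (weakly) increasing near the origin. -/
def Assumption1 (π : ℝ → ℝ) (επ δπ : ℝ) : Prop :=
  επ ∈ Set.Ioo (0 : ℝ) 1 ∧ 0 < δπ ∧
  (∀ ε ∈ Set.Icc (0 : ℝ) 1, 0 ≤ π ε) ∧
  MeasureTheory.IntegrableOn π (Set.Icc (0 : ℝ) 1) ∧
  (∀ ε ∈ Set.Ioo (0 : ℝ) επ, δπ ≤ π ε) ∧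
  MonotoneOn (fun ε => ε * π ε) (Set.Ioo (0 : ℝ) επ)

/-! Put `t = S_n / A_n²`, the maximiser of `ε S_n - ε² A_n² / 2`. Since `log (1 + y)` agrees with
`y - y² / 2` up to terms that `x_i ≥ -1` lets us bound by multiples of `x_i²`, the product
`∏ (1 + ε x_i)` is at least `exp (S_n² / (2 A_n²) - 1)` on the whole window `[t, u_n]`.
There `c(ε) ≥ c(u_n)` because `c` decreases, and `π(ε) ≥ t π(t) / u_n` because `ε π(ε)` increases.
Integrating over the window only, it remains to see that `(u_n - t) t / u_n ≥ 1 / (6 A_n)`. -/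

lemma sub_sq_div_two_le_log_one_add {y : ℝ} (hy : 0 ≤ y) :
    y - y ^ 2 / 2 ≤ Real.log (1 + y) := by
  refine le_trans ?_ (Real.le_log_one_add_of_nonneg hy)
  rw [le_div_iff₀ (by linarith)]
  nlinarith [pow_nonneg hy 3]

lemma log_one_add_ge_of_abs_le_half {y : ℝ} (hy : |y| ≤ 1 / 2) :
    y - y ^ 2 / 2 + y ^ 3 / 3 - 2 * y ^ 4 ≤ Real.log (1 + y) := by
  have h := Real.abs_log_sub_add_sum_range_le (x := -y) (by rw [abs_neg]; linarith) 3
  rw [abs_neg, sub_neg_eq_add] at h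
  have hrem : |y| ^ 4 / (1 - |y|) ≤ 2 * y ^ 4 := by
    rw [div_le_iff₀ (by linarith), Even.pow_abs (by decide)]
    nlinarith [mul_le_mul_of_nonneg_left hy (by positivity : (0 : ℝ) ≤ y ^ 4)]
  have := (abs_le.mp (h.trans hrem)).1
  norm_num [Finset.sum_range_succ] at this
  linarith

lemma log_one_add_mul_ge {x e : ℝ} (hx : -1 ≤ x) (he : 0 < e) (he' : e ≤ 1 / 2) :
    e * x - (e ^ 2 / 2 + e ^ 3 / 3 + 2 * e ^ 4) * x ^ 2 ≤ Real.log (1 + e * x) := by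
  rcases le_or_gt 0 x with hx0 | hx0
  · have := sub_sq_div_two_le_log_one_add (mul_nonneg he.le hx0)
    nlinarith [pow_pos he 3, pow_pos he 4, sq_nonneg x]
  · have hy : |e * x| ≤ 1 / 2 := by rw [abs_le]; constructor <;> nlinarith
    have := log_one_add_ge_of_abs_le_half hy
    have h3 : -(e ^ 3 * x ^ 2) ≤ (e * x) ^ 3 := by
      nlinarith [mul_nonneg (mul_nonneg (pow_pos he 3).le (sq_nonneg x))
        (by linarith : (0 : ℝ) ≤ x + 1)]
    have h4 : (e * x) ^ 4 ≤ e ^ 4 * x ^ 2 := by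
      nlinarith [mul_nonneg (mul_nonneg (pow_pos he 4).le (sq_nonneg x))
        (mul_nonneg (neg_nonneg.mpr hx0.le) (by linarith : (0 : ℝ) ≤ x + 1))]
    nlinarith

lemma exp_le_prod_one_add_mul {ι : Type*} (s : Finset ι) {x : ι → ℝ} (hx : ∀ i ∈ s, -1 ≤ x i)
    {e : ℝ} (he : 0 < e) (he' : e ≤ 1 / 2) :
    Real.exp (e * ∑ i ∈ s, x i - (e ^ 2 / 2 + e ^ 3 / 3 + 2 * e ^ 4) * ∑ i ∈ s, x i ^ 2)
      ≤ ∏ i ∈ s, (1 + e * x i) := by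
  rw [Finset.mul_sum, Finset.mul_sum, ← Finset.sum_sub_distrib, Real.exp_sum]
  refine Finset.prod_le_prod (fun i _ => (Real.exp_pos _).le) fun i hi => ?_
  have hpos : 0 < 1 + e * x i := by nlinarith [hx i hi]
  exact (Real.le_log_iff_exp_le hpos).1 (log_one_add_mul_ge (hx i hi) he he')

lemma window_poly_le {q : ℝ} (hq : 0 ≤ q) :
    3 * (1 - q) ^ 2 * (1 + q ^ 2) ^ 2 + (1 + q) ^ 3 * (1 + q ^ 2) + 3 * q ^ 2 * (1 + q) ^ 4
      ≤ 6 * (1 + q ^ 2) ^ 4 := by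
  nlinarith [sq_nonneg q, sq_nonneg (1 - q), sq_nonneg (q ^ 2), sq_nonneg (q * (1 - q)),
    sq_nonneg (q ^ 2 - q), pow_nonneg hq 3, pow_nonneg hq 4, sq_nonneg (1 - 2 * q ^ 2)]

lemma exponent_deficit_le {t q e : ℝ} (ht : 0 < t) (hq : 0 < q) (htq : 2 * t ≤ q ^ 2)
    (he : t ≤ e) (he' : e ≤ t * ((1 + q) / (1 + q ^ 2))) :
    3 * (e - t) ^ 2 + 2 * e ^ 3 + 12 * e ^ 4 ≤ 6 * t ^ 2 * q ^ 2 := by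
  set r := (1 + q) / (1 + q ^ 2) with hr
  have hpoly : 3 * (r - 1) ^ 2 + q ^ 2 * r ^ 3 + 3 * q ^ 4 * r ^ 4 ≤ 6 * q ^ 2 := by
    have hr_eq : 3 * (r - 1) ^ 2 + q ^ 2 * r ^ 3 + 3 * q ^ 4 * r ^ 4 = q ^ 2 *
        (3 * (1 - q) ^ 2 * (1 + q ^ 2) ^ 2 + (1 + q) ^ 3 * (1 + q ^ 2) + 3 * q ^ 2 * (1 + q) ^ 4)
        / (1 + q ^ 2) ^ 4 := by
      rw [hr]; field_simp; ring
    rw [hr_eq, div_le_iff₀ (by positivity)]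
    nlinarith [mul_le_mul_of_nonneg_left (window_poly_le hq.le) (sq_nonneg q)]
  have hq4 : 4 * t ^ 2 ≤ q ^ 4 := by nlinarith
  have hr0 : 0 ≤ r := by positivity
  calc 3 * (e - t) ^ 2 + 2 * e ^ 3 + 12 * e ^ 4
      ≤ 3 * (t * r - t) ^ 2 + 2 * (t * r) ^ 3 + 12 * (t * r) ^ 4 := by
        have : 0 ≤ e := ht.le.trans he
        gcongr
    _ = t ^ 2 * (3 * (r - 1) ^ 2 + (2 * t) * r ^ 3 + 3 * (4 * t ^ 2) * r ^ 4) := by ring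
    _ ≤ t ^ 2 * (3 * (r - 1) ^ 2 + q ^ 2 * r ^ 3 + 3 * q ^ 4 * r ^ 4) := by gcongr
    _ ≤ t ^ 2 * (6 * q ^ 2) := by gcongr
    _ = 6 * t ^ 2 * q ^ 2 := by ring

/-- The paper's `u_n`, with `s = S_n` and `a = A_n`. -/
noncomputable def windowEnd (s a : ℝ) : ℝ := (1 + a / s) / (1 + a ^ 2 / s ^ 2) * (s / a ^ 2)

lemma windowEnd_eq (s a : ℝ) :
    windowEnd s a = s / a ^ 2 * ((1 + a / s) / (1 + (a / s) ^ 2)) := by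
  rw [windowEnd, div_pow, mul_comm]

lemma lt_windowEnd {s a : ℝ} (ha : 0 < a) (has : a < s) : s / a ^ 2 < windowEnd s a := by
  have hs : 0 < s := ha.trans has
  rw [windowEnd_eq]
  refine lt_mul_of_one_lt_right (by positivity) ((one_lt_div (by positivity)).2 ?_)
  have : a / s < 1 := (div_lt_one hs).2 has
  nlinarith [div_pos ha hs]

lemma two_mul_div_sq_lt_div_sq {s a : ℝ} (hs : 0 < s) (ha : 0 < a) (h3 : 2 * s ^ 3 < a ^ 4) :
    2 * (s / a ^ 2) < (a / s) ^ 2 := by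
  rw [div_pow, ← mul_div_assoc, div_lt_div_iff₀ (by positivity) (by positivity)]
  nlinarith

lemma windowEnd_lt {s a : ℝ} (hs : 0 < s) (ha : 0 < a) (h3 : 2 * s ^ 3 < a ^ 4) :
    windowEnd s a < a ^ 2 / s ^ 2 := by
  have htq := two_mul_div_sq_lt_div_sq hs ha h3
  have hr : (1 + a / s) / (1 + (a / s) ^ 2) ≤ 2 := by
    rw [div_le_iff₀ (by positivity)]
    nlinarith [sq_nonneg (a / s - 1 / 2)]
  calc windowEnd s a = s / a ^ 2 * ((1 + a / s) / (1 + (a / s) ^ 2)) := windowEnd_eq s a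
    _ ≤ s / a ^ 2 * 2 := by gcongr
    _ < a ^ 2 / s ^ 2 := by rw [← div_pow]; linarith

lemma windowEnd_length {s a : ℝ} (hs : 0 < s) (ha : 0 < a) (h2 : 2 * a ^ 2 < s ^ 2) :
    1 / (6 * a) ≤ (windowEnd s a - s / a ^ 2) * (s / a ^ 2) / windowEnd s a := by
  have h7 : 7 * a ≤ 5 * s := by nlinarith
  have heq : (windowEnd s a - s / a ^ 2) * (s / a ^ 2) / windowEnd s a
      = (s - a) / (a * (s + a)) := by
    rw [windowEnd]; field_simp; ring
  rw [heq, div_le_div_iff₀ (by positivity) (by positivity)]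
  nlinarith

lemma exponent_ge {s a e : ℝ} (hs : 0 < s) (ha : 0 < a) (h3 : 2 * s ^ 3 < a ^ 4)
    (he : s / a ^ 2 ≤ e) (he' : e ≤ windowEnd s a) :
    s ^ 2 / (2 * a ^ 2) - 1 ≤ e * s - (e ^ 2 / 2 + e ^ 3 / 3 + 2 * e ^ 4) * a ^ 2 := by
  have hdef := exponent_deficit_le (by positivity) (by positivity)
    (two_mul_div_sq_lt_div_sq hs ha h3).le he
    (he'.trans_eq (windowEnd_eq s a))
  -- complete the square around the maximiser `s / a²` of `e s - e² a² / 2`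
  have hid : e * s - (e ^ 2 / 2 + e ^ 3 / 3 + 2 * e ^ 4) * a ^ 2 = s ^ 2 / (2 * a ^ 2)
      - a ^ 2 / 6 * (3 * (e - s / a ^ 2) ^ 2 + 2 * e ^ 3 + 12 * e ^ 4) := by
    field_simp; ring
  have hone : a ^ 2 / 6 * (6 * (s / a ^ 2) ^ 2 * (a / s) ^ 2) = 1 := by field_simp
  rw [hid]
  linarith [mul_le_mul_of_nonneg_left hdef (by positivity : (0 : ℝ) ≤ a ^ 2 / 6)]

lemma mul_le_K_of_window {π c : ℝ → ℝ} {επ : ℝ} (hπ0 : ∀ ε ∈ Icc (0 : ℝ) 1, 0 ≤ π ε)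
    (hπmono : MonotoneOn (fun ε => ε * π ε) (Ioo 0 επ)) (hc0 : ∀ ε ∈ Ioo (0 : ℝ) 1, 0 ≤ c ε)
    (hcdec : AntitoneOn c (Ioo 0 1)) (hcint : IntegrableOn (fun ε => c ε * π ε) (Ioo 0 1))
    {x : ℕ → ℝ} (hx : ∀ i, -1 ≤ x i) {n : ℕ} {t u L : ℝ} (ht : 0 < t) (htu : t ≤ u)
    (hu1 : u < 1) (huε : u < επ) (hL : ∀ e ∈ Icc t u, L ≤ ∏ i ∈ Finset.range n, (1 + e * x i)) :
    L * (c u * (t * π t / u)) * (u - t) ≤ K (fun ε => c ε * π ε) x n := by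
  set F := fun e => (∏ i ∈ Finset.range n, (1 + e * x i)) * (c e * π e)
  have hsub : Icc t u ⊆ Ioo 0 1 := Icc_subset_Ioo ht hu1
  have hprod0 : ∀ e ∈ Ioo (0 : ℝ) 1, 0 ≤ ∏ i ∈ Finset.range n, (1 + e * x i) :=
    fun e he => Finset.prod_nonneg fun i _ => by nlinarith [hx i, he.1, he.2]
  have hF0 : ∀ e ∈ Ioo (0 : ℝ) 1, 0 ≤ F e := fun e he =>
    mul_nonneg (hprod0 e he) (mul_nonneg (hc0 e he) (hπ0 e (Ioo_subset_Icc_self he)))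
  have hFint : IntegrableOn F (Ioo 0 1) :=
    hcint.continuousOn_mul_of_subset (by fun_prop) isCompact_Icc measurableSet_Ioo
      Ioo_subset_Icc_self
  have hpoint : ∀ e ∈ Icc t u, L * (c u * (t * π t / u)) ≤ F e := by
    rintro e ⟨hte, heu⟩
    have he0 : 0 < e := ht.trans_le hte
    have hπt : 0 ≤ π t := hπ0 t ⟨ht.le, by linarith⟩
    have hce : c u ≤ c e := hcdec ⟨he0, heu.trans_lt hu1⟩ ⟨he0.trans_le heu, hu1⟩ heu
    have hπe : t * π t / u ≤ π e := calc
      t * π t / u ≤ t * π t / e := by gcongr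
      _ ≤ e * π e / e := div_le_div_of_nonneg_right
        (hπmono ⟨ht, htu.trans_lt huε⟩ ⟨he0, heu.trans_lt huε⟩ hte) he0.le
      _ = π e := mul_div_cancel_left₀ _ he0.ne'
    have hcu : 0 ≤ c u := hc0 u ⟨ht.trans_le htu, hu1⟩
    have hm0 : 0 ≤ t * π t / u := div_nonneg (mul_nonneg ht.le hπt) (by linarith)
    exact mul_le_mul (hL e ⟨hte, heu⟩) (mul_le_mul hce hπe hm0 (hcu.trans hce))
      (mul_nonneg hcu hm0) (hprod0 e (hsub ⟨hte, heu⟩))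
  calc L * (c u * (t * π t / u)) * (u - t) ≤ ∫ e in Icc t u, F e := by
        simpa [Real.volume_real_Icc_of_le htu] using setIntegral_ge_of_const_le_real
          measurableSet_Icc (by simp) hpoint (hFint.mono_set hsub)
    _ ≤ ∫ e in Ioo 0 1, F e :=
        setIntegral_mono_set hFint (ae_restrict_of_forall_mem measurableSet_Ioo hF0)
          hsub.eventuallyLE

lemma exp_sub_one_le_prod_of_mem_window {x : ℕ → ℝ} (hx : ∀ i, -1 ≤ x i) {n : ℕ} {a e : ℝ}
    (hS : 0 < S x n) (ha : 0 < a) (hab : A2 x n = a ^ 2) (h2 : 2 * a ^ 2 < S x n ^ 2)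
    (h3 : 2 * S x n ^ 3 < a ^ 4) (he : e ∈ Icc (S x n / a ^ 2) (windowEnd (S x n) a)) :
    Real.exp (S x n ^ 2 / (2 * a ^ 2) - 1) ≤ ∏ i ∈ Finset.range n, (1 + e * x i) := by
  have he0 : 0 < e := (by positivity : 0 < S x n / a ^ 2).trans_le he.1
  have hhalf : e ≤ 1 / 2 := by
    have : a ^ 2 / S x n ^ 2 < 1 / 2 := by rw [div_lt_iff₀ (by positivity)]; linarith
    linarith [he.2, windowEnd_lt hS ha h3]
  have hprod := exp_le_prod_one_add_mul (Finset.range n) (fun i _ => hx i) he0 hhalf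
  change Real.exp (e * S x n - _ * A2 x n) ≤ _ at hprod
  rw [hab] at hprod
  exact (Real.exp_le_exp.2 (exponent_ge hS ha h3 he.1 he.2)).trans hprod

lemma le_K_of_sq_bounds {π c : ℝ → ℝ} {επ : ℝ} (hπ0 : ∀ ε ∈ Icc (0 : ℝ) 1, 0 ≤ π ε)
    (hπmono : MonotoneOn (fun ε => ε * π ε) (Ioo 0 επ)) (hc0 : ∀ ε ∈ Ioo (0 : ℝ) 1, 0 ≤ c ε)
    (hcdec : AntitoneOn c (Ioo 0 1)) (hcint : IntegrableOn (fun ε => c ε * π ε) (Ioo 0 1))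
    {x : ℕ → ℝ} (hx : ∀ i, -1 ≤ x i) {n : ℕ} {a : ℝ} (hS : 0 < S x n) (ha : 0 < a)
    (hab : A2 x n = a ^ 2) (h2 : 2 * a ^ 2 < S x n ^ 2) (hε : a ^ 2 < επ * S x n ^ 2)
    (h3 : 2 * S x n ^ 3 < a ^ 4) :
    c (windowEnd (S x n) a) * (1 / (6 * Real.exp 1)) * (1 / a) * π (S x n / a ^ 2)
        * Real.exp (S x n ^ 2 / (2 * a ^ 2)) ≤ K (fun ε => c ε * π ε) x n := by
  have htu : S x n / a ^ 2 < windowEnd (S x n) a := lt_windowEnd ha (by nlinarith)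
  have hwin : windowEnd (S x n) a < a ^ 2 / S x n ^ 2 := windowEnd_lt hS ha h3
  have hwin_half : a ^ 2 / S x n ^ 2 < 1 / 2 := by rw [div_lt_iff₀ (by positivity)]; linarith
  have hwin_ε : a ^ 2 / S x n ^ 2 < επ := by rw [div_lt_iff₀ (by positivity)]; linarith
  have hc : 0 ≤ c (windowEnd (S x n) a) :=
    hc0 _ ⟨(by positivity : 0 < S x n / a ^ 2).trans htu, by linarith⟩
  have hπ : 0 ≤ π (S x n / a ^ 2) := hπ0 _ ⟨by positivity, by linarith⟩
  calc c (windowEnd (S x n) a) * (1 / (6 * Real.exp 1)) * (1 / a) * π (S x n / a ^ 2)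
        * Real.exp (S x n ^ 2 / (2 * a ^ 2))
      = Real.exp (S x n ^ 2 / (2 * a ^ 2) - 1) * (c (windowEnd (S x n) a) * π (S x n / a ^ 2))
        * (1 / (6 * a)) := by
        rw [Real.exp_sub]; field_simp
    _ ≤ Real.exp (S x n ^ 2 / (2 * a ^ 2) - 1) * (c (windowEnd (S x n) a) * π (S x n / a ^ 2))
        * ((windowEnd (S x n) a - S x n / a ^ 2) * (S x n / a ^ 2) / windowEnd (S x n) a) :=
        mul_le_mul_of_nonneg_left (windowEnd_length hS ha h2)
          (mul_nonneg (Real.exp_pos _).le (mul_nonneg hc hπ))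
    _ = _ := by ring
    _ ≤ _ := mul_le_K_of_window hπ0 hπmono hc0 hcdec hcint hx (by positivity) htu.le
          (by linarith) (hwin.trans hwin_ε)
          fun e he => exp_sub_one_le_prod_of_mem_window hx hS ha hab h2 h3 he

theorem refined_inequality_weighted_general (π : ℝ → ℝ) (επ δπ : ℝ) (hπ : Assumption1 π επ δπ)
    (c : ℝ → ℝ) (hc0 : ∀ ε ∈ Set.Ioo (0 : ℝ) 1, 0 ≤ c ε)
    (hcdec : AntitoneOn c (Set.Ioo (0 : ℝ) 1))
    (hcint : MeasureTheory.IntegrableOn (fun ε => c ε * π ε) (Set.Ioo (0 : ℝ) 1))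
    (n : ℕ) (x : ℕ → ℝ) (hx : ∀ i, -1 ≤ x i)
    (hS : 0 < S x n)
    (h2 : max 2 (1 / επ) < (S x n) ^ 2 / A2 x n)
    (h3 : (S x n) ^ 3 / (A2 x n) ^ 2 < 1 / 2) :
    c ((1 + Real.sqrt (A2 x n) / S x n) / (1 + A2 x n / (S x n) ^ 2) * (S x n / A2 x n)) *
        (1 / (6 * Real.exp 1)) * (1 / Real.sqrt (A2 x n)) * π (S x n / A2 x n) *
        Real.exp ((S x n) ^ 2 / (2 * A2 x n))
      ≤ K (fun ε => c ε * π ε) x n := by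
  obtain ⟨⟨hεπ, -⟩, -, hπ0, -, -, hπmono⟩ := hπ
  have hA2 : 0 < A2 x n := by
    have : 0 ≤ A2 x n := Finset.sum_nonneg fun i _ => sq_nonneg (x i)
    refine this.lt_of_ne fun h => ?_
    rw [← h, div_zero] at h2
    linarith [le_max_left 2 (1 / επ)]
  obtain ⟨a, ha, hab⟩ : ∃ a, 0 < a ∧ A2 x n = a ^ 2 :=
    ⟨_, Real.sqrt_pos.2 hA2, (Real.sq_sqrt hA2.le).symm⟩
  rw [hab] at h2 h3
  rw [hab, Real.sqrt_sq ha.le]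
  rw [max_lt_iff, lt_div_iff₀ (by positivity), div_lt_div_iff₀ hεπ (by positivity)] at h2
  rw [div_lt_iff₀ (by positivity)] at h3
  exact le_K_of_sq_bounds hπ0 hπmono hc0 hcdec hcint hx hS ha hab (by linarith) (by linarith)
    (by linarith)

theorem refined_inequality_weighted (π : ℝ → ℝ) (επ δπ : ℝ) (hπ : Assumption1 π επ δπ)
    (c : ℝ → ℝ) (hc0 : ∀ ε ∈ Set.Ioo (0 : ℝ) 1, 0 ≤ c ε)
    (hcdec : AntitoneOn c (Set.Ioo (0 : ℝ) 1))
    (hcint : MeasureTheory.IntegrableOn (fun ε => c ε * π ε) (Set.Ioo (0 : ℝ) 1))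
    (n : ℕ) (hn : 1 ≤ n) (x : ℕ → ℝ) (hx : ∀ i, -1 ≤ x i)
    (hS : 0 < S x n)
    (h2 : max 2 (1 / επ) < (S x n) ^ 2 / A2 x n)
    (h3 : (S x n) ^ 3 / (A2 x n) ^ 2 < 1 / 2) :
    c ((1 + Real.sqrt (A2 x n) / S x n) / (1 + A2 x n / (S x n) ^ 2) * (S x n / A2 x n)) *
        (1 / (6 * Real.exp 1)) * (1 / Real.sqrt (A2 x n)) * π (S x n / A2 x n) *
        Real.exp ((S x n) ^ 2 / (2 * A2 x n))
      ≤ K (fun ε => c ε * π ε) x n :=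
  refined_inequality_weighted_general π επ δπ hπ c hc0 hcdec hcint n x hx hS h2 h3
end

section
/- Fix a ∈ (0,1) and let π be the power prior π(ε) = ε^{-a} for ε ∈ (0,1). Let x : ℕ → ℝ satisfy x_i ≥ -1 for all i. If Σ_{i=1}^∞ x_i² = ∞ and limsup_{n→∞} S_n/√((1-a)·A_n²·ln(A_n²)) > 1, then limsup_{n→∞} K_n^π = ∞. -/
open MeasureTheory Filter Set

open Topology

/-!
For `0 ≤ ε < 1` and `y ≥ -ε` one has `log (1 + y) ≥ y - y² / (2 (1 - ε))`, so the capital of the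
constant bet `ε` is at least `exp (ε S_n - ε² A_n² / (2 (1 - ε)))`. At the (infinitely many) times
where `S_n ≥ (1 + d) √((1 - a) A_n² ln A_n²)`, every bet in the window `[e₀, (1 + d/8) e₀]`, with
`e₀ = √((1 - a) ln A_n² / A_n²)`, has capital at least `(A_n²)^((1 + d)(1 - a)/2)`. The window has
length `≍ e₀` and prior density `≍ e₀^(-a)` on it, whence `K_n^π ≳ (A_n²)^((1 - a) d / 2) → ∞`.
-/

lemma sub_sq_div_le_log_one_add {ε y : ℝ} (hε0 : 0 ≤ ε) (hε1 : ε < 1) (hy : -ε ≤ y) :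
    y - y ^ 2 / (2 * (1 - ε)) ≤ Real.log (1 + y) := by
  set f : ℝ → ℝ := fun t => Real.log (1 + t) - (t - t ^ 2 / (2 * (1 - ε)))
  have hf' : ∀ t, -1 < t → HasDerivAt f (t * (t + ε) / ((1 + t) * (1 - ε))) t := by
    intro t ht
    have hlog := ((hasDerivAt_id t).const_add 1).log (ne_of_gt (by simp only [id]; linarith))
    have hpoly := (hasDerivAt_id t).sub ((hasDerivAt_pow 2 t).div_const (2 * (1 - ε)))
    refine (hlog.sub hpoly).congr_deriv ?_
    field_simp [show 1 + t ≠ 0 by linarith, show 1 - ε ≠ 0 by linarith]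
    simp only [id]
    ring
  have hcont : ContinuousOn f (Ioi (-1)) := fun t ht => (hf' t ht).continuousAt.continuousWithinAt
  have hdiff : DifferentiableOn ℝ f (Ioi (-1)) := fun t ht =>
    (hf' t ht).differentiableAt.differentiableWithinAt
  have h0 : f 0 = 0 := by simp [f]
  suffices 0 ≤ f y by simp only [f] at this; linarith
  rcases le_total 0 y with hy0 | hy0
  · have hsub : Ici 0 ⊆ Ioi (-1 : ℝ) := Ici_subset_Ioi.2 (by norm_num)
    have hmono : MonotoneOn f (Ici 0) := by
      refine monotoneOn_of_deriv_nonneg (convex_Ici 0) (hcont.mono hsub)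
        (hdiff.mono (interior_subset.trans hsub)) fun t ht => ?_
      rw [interior_Ici, mem_Ioi] at ht
      rw [(hf' t (by linarith)).deriv]
      apply div_nonneg <;> nlinarith
    simpa [h0] using hmono (mem_Ici.2 le_rfl) (mem_Ici.2 hy0) hy0
  · have hsub : Icc (-ε) 0 ⊆ Ioi (-1) := fun t ht => mem_Ioi.2 (by linarith [ht.1])
    have hanti : AntitoneOn f (Icc (-ε) 0) := by
      refine antitoneOn_of_deriv_nonpos (convex_Icc _ _) (hcont.mono hsub)
        (hdiff.mono (interior_subset.trans hsub)) fun t ht => ?_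
      rw [interior_Icc, mem_Ioo] at ht
      rw [(hf' t (by linarith)).deriv]
      apply div_nonpos_of_nonpos_of_nonneg <;> nlinarith
    simpa [h0] using hanti ⟨hy, hy0⟩ ⟨by linarith, le_rfl⟩ hy0

lemma exp_le_prod_one_add_mul_s6 {x : ℕ → ℝ} (hx : ∀ i, -1 ≤ x i) {ε : ℝ} (hε0 : 0 ≤ ε) (hε1 : ε < 1)
    (n : ℕ) :
    Real.exp (ε * S x n - ε ^ 2 * A2 x n / (2 * (1 - ε))) ≤
      ∏ i ∈ Finset.range n, (1 + ε * x i) := by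
  have hsum : ε * S x n - ε ^ 2 * A2 x n / (2 * (1 - ε)) =
      ∑ i ∈ Finset.range n, (ε * x i - (ε * x i) ^ 2 / (2 * (1 - ε))) := by
    simp only [S, A2, Finset.mul_sum, Finset.sum_sub_distrib, ← Finset.sum_div, mul_pow]
  rw [hsum, Real.exp_sum]
  refine Finset.prod_le_prod (fun i _ => (Real.exp_pos _).le) fun i _ => ?_
  have hy : -ε ≤ ε * x i := by nlinarith [hx i]
  calc Real.exp (ε * x i - (ε * x i) ^ 2 / (2 * (1 - ε)))
      ≤ Real.exp (Real.log (1 + ε * x i)) :=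
        Real.exp_le_exp.2 (sub_sq_div_le_log_one_add hε0 hε1 hy)
    _ = 1 + ε * x i := Real.exp_log (by linarith)

lemma integrableOn_prod_one_add_mul_mul {π : ℝ → ℝ} (hπ : IntegrableOn π (Ioo 0 1))
    (x : ℕ → ℝ) (n : ℕ) :
    IntegrableOn (fun ε => (∏ i ∈ Finset.range n, (1 + ε * x i)) * π ε) (Ioo 0 1) := by
  refine hπ.bdd_mul (c := ∏ i ∈ Finset.range n, (1 + |x i|)) (by fun_prop) ?_
  refine (ae_restrict_iff' measurableSet_Ioo).2 (Eventually.of_forall fun ε hε => ?_)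
  rw [Real.norm_eq_abs, Finset.abs_prod]
  refine Finset.prod_le_prod (fun i _ => abs_nonneg _) fun i _ => ?_
  calc |1 + ε * x i| ≤ 1 + ε * |x i| := by
        simpa [abs_mul, abs_of_pos hε.1] using abs_add_le 1 (ε * x i)
    _ ≤ 1 + |x i| := by nlinarith [abs_nonneg (x i), hε.2]

lemma le_K_of_le_on_Icc {π : ℝ → ℝ} (hπ0 : ∀ ε ∈ Ioo (0 : ℝ) 1, 0 ≤ π ε)
    (hπ : IntegrableOn π (Ioo 0 1)) {x : ℕ → ℝ} (hx : ∀ i, -1 ≤ x i) {n : ℕ} {e₀ e₁ m : ℝ}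
    (h0 : 0 < e₀) (h01 : e₀ ≤ e₁) (h1 : e₁ < 1)
    (hm : ∀ ε ∈ Icc e₀ e₁, m ≤ (∏ i ∈ Finset.range n, (1 + ε * x i)) * π ε) :
    m * (e₁ - e₀) ≤ K π x n := by
  have hint := integrableOn_prod_one_add_mul_mul hπ x n
  have hsub : Icc e₀ e₁ ⊆ Ioo 0 1 := Icc_subset_Ioo h0 h1
  have hnonneg : ∀ ε ∈ Ioo (0 : ℝ) 1, 0 ≤ (∏ i ∈ Finset.range n, (1 + ε * x i)) * π ε :=
    fun ε hε => mul_nonneg (Finset.prod_nonneg fun i _ => by nlinarith [hx i, hε.1, hε.2])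
      (hπ0 ε hε)
  calc m * (e₁ - e₀) = m * volume.real (Icc e₀ e₁) := by rw [Real.volume_real_Icc_of_le h01]
    _ ≤ ∫ ε in Icc e₀ e₁, (∏ i ∈ Finset.range n, (1 + ε * x i)) * π ε :=
      setIntegral_ge_of_const_le_real measurableSet_Icc (by simp) hm (hint.mono_set hsub)
    _ ≤ K π x n := setIntegral_mono_set hint
      ((ae_restrict_iff' measurableSet_Ioo).2 (Eventually.of_forall hnonneg)) hsub.eventuallyLE

lemma le_window_exponent {d q A e₀ ε s : ℝ} (hd0 : 0 < d) (hd1 : d ≤ 1) (hq : 0 ≤ q)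
    (hA : 0 < A) (he₀ : 0 < e₀) (he₀sq : e₀ ^ 2 * A = q) (hsmall : e₀ ≤ d / 16)
    (hs : (1 + d) * q ≤ e₀ * s) (hε : ε ∈ Icc e₀ ((1 + d / 8) * e₀)) :
    (1 + d) / 2 * q ≤ ε * s - ε ^ 2 * A / (2 * (1 - ε)) := by
  obtain ⟨hεl, hεu⟩ := hε
  have hs0 : 0 ≤ s := nonneg_of_mul_nonneg_right (by nlinarith) he₀
  have hlin : (1 + d) * q ≤ ε * s := hs.trans (mul_le_mul_of_nonneg_right hεl hs0)
  have hsq : ε ^ 2 * A ≤ (1 + d / 8) ^ 2 * q := by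
    rw [← he₀sq]
    nlinarith [pow_le_pow_left₀ (he₀.le.trans hεl) hεu 2]
  have hε1 : ε ≤ d / 8 := by nlinarith
  -- the window width `d / 8` is chosen so that `(1 + d/8)² ≤ (1 + d)(1 - d/8)` when `d ≤ 1`
  have hquad : ε ^ 2 * A / (2 * (1 - ε)) ≤ (1 + d) / 2 * q := by
    rw [div_le_iff₀ (by linarith)]
    nlinarith [mul_nonneg hq hd0.le, mul_nonneg (mul_nonneg hq hd0.le) (sub_nonneg.2 hd1)]
  linarith

lemma le_window_mass {a d A e₀ : ℝ} (ha1 : a < 1) (hd0 : 0 < d) (hd1 : d ≤ 1)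
    (hA : 0 < A) (he₀ : 0 < e₀) (h : 1 - a ≤ e₀ ^ 2 * A) :
    d / 16 * (1 - a) ^ ((1 - a) / 2) * A ^ ((1 - a) * d / 2) ≤
      A ^ ((1 + d) / 2 * (1 - a)) * ((1 + d / 8) * e₀) ^ (-a) * ((1 + d / 8) * e₀ - e₀) := by
  have hβ : 1 / 2 ≤ (1 + d / 8) ^ (-a) := by
    have := Real.rpow_le_rpow_of_exponent_le (by linarith : 1 ≤ 1 + d / 8)
      (by linarith : -1 ≤ -a)
    rw [Real.rpow_neg_one] at this
    exact le_trans (by rw [one_div]; exact inv_anti₀ (by positivity) (by linarith)) this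
  have hbase : (1 - a) ^ ((1 - a) / 2) ≤ e₀ ^ (1 - a) * A ^ ((1 - a) / 2) := by
    calc (1 - a) ^ ((1 - a) / 2) ≤ (e₀ ^ 2 * A) ^ ((1 - a) / 2) :=
          Real.rpow_le_rpow (by linarith) h (by linarith)
      _ = e₀ ^ (1 - a) * A ^ ((1 - a) / 2) := by
        rw [Real.mul_rpow (by positivity) hA.le, ← Real.rpow_natCast_mul he₀.le]
        ring_nf
  have hsplit : A ^ ((1 + d) / 2 * (1 - a)) = A ^ ((1 - a) / 2) * A ^ ((1 - a) * d / 2) := by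
    rw [← Real.rpow_add hA]; ring_nf
  have he₀pow : e₀ ^ (-a) * e₀ = e₀ ^ (1 - a) := by
    rw [sub_eq_neg_add, Real.rpow_add he₀, Real.rpow_one]
  calc d / 16 * (1 - a) ^ ((1 - a) / 2) * A ^ ((1 - a) * d / 2)
      ≤ d / 8 * (1 / 2) * (e₀ ^ (1 - a) * A ^ ((1 - a) / 2)) * A ^ ((1 - a) * d / 2) := by
        gcongr; linarith
    _ ≤ d / 8 * (1 + d / 8) ^ (-a) * (e₀ ^ (1 - a) * A ^ ((1 - a) / 2)) *
          A ^ ((1 - a) * d / 2) := by gcongr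
    _ = _ := by rw [Real.mul_rpow (by positivity) he₀.le, hsplit, ← he₀pow]; ring

lemma le_K_rpow_neg {a d : ℝ} (ha0 : 0 ≤ a) (ha1 : a < 1) (hd0 : 0 < d) (hd1 : d ≤ 1)
    {x : ℕ → ℝ} (hx : ∀ i, -1 ≤ x i) {n : ℕ} (hA : Real.exp 1 ≤ A2 x n)
    (hsmall : √((1 - a) * Real.log (A2 x n) / A2 x n) ≤ d / 16)
    (hS : 1 + d ≤ S x n / √((1 - a) * A2 x n * Real.log (A2 x n))) :
    d / 16 * (1 - a) ^ ((1 - a) / 2) * A2 x n ^ ((1 - a) * d / 2) ≤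
      K (fun ε => ε ^ (-a)) x n := by
  set A := A2 x n
  set q := (1 - a) * Real.log A with hq_def
  set e₀ := √(q / A)
  have hA0 : 0 < A := (Real.exp_pos 1).trans_le hA
  have hq : 1 - a ≤ q :=
    le_mul_of_one_le_right (by linarith) ((Real.le_log_iff_exp_le hA0).2 hA)
  have he₀ : 0 < e₀ := Real.sqrt_pos.2 (div_pos (by linarith) hA0)
  have he₀sq : e₀ ^ 2 * A = q := by
    rw [Real.sq_sqrt (div_nonneg (by linarith) hA0.le)]
    field_simp
  have hroot : √((1 - a) * A * Real.log A) = A * e₀ := by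
    rw [show (1 - a) * A * Real.log A = A ^ 2 * (q / A) by field_simp; ring,
      Real.sqrt_mul (sq_nonneg _), Real.sqrt_sq hA0.le]
  have hs : (1 + d) * q ≤ e₀ * S x n := by
    rw [hroot, le_div_iff₀ (by positivity)] at hS
    calc (1 + d) * q = e₀ * ((1 + d) * (A * e₀)) := by rw [← he₀sq]; ring
      _ ≤ e₀ * S x n := mul_le_mul_of_nonneg_left hS he₀.le
  have hm : ∀ ε ∈ Icc e₀ ((1 + d / 8) * e₀),
      A ^ ((1 + d) / 2 * (1 - a)) * ((1 + d / 8) * e₀) ^ (-a) ≤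
        (∏ i ∈ Finset.range n, (1 + ε * x i)) * ε ^ (-a) := by
    intro ε hε
    have hε0 : 0 < ε := he₀.trans_le hε.1
    have hexp : A ^ ((1 + d) / 2 * (1 - a)) ≤ ∏ i ∈ Finset.range n, (1 + ε * x i) :=
      calc A ^ ((1 + d) / 2 * (1 - a)) = Real.exp ((1 + d) / 2 * q) := by
            rw [Real.rpow_def_of_pos hA0, hq_def]; ring_nf
        _ ≤ Real.exp (ε * S x n - ε ^ 2 * A / (2 * (1 - ε))) :=
          Real.exp_le_exp.2 (le_window_exponent hd0 hd1 (by linarith) hA0 he₀ he₀sq hsmall hs hε)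
        _ ≤ ∏ i ∈ Finset.range n, (1 + ε * x i) :=
          exp_le_prod_one_add_mul_s6 hx hε0.le (by nlinarith [hε.2]) n
    exact mul_le_mul hexp (Real.rpow_le_rpow_of_nonpos hε0 hε.2 (by linarith))
      (by positivity) ((Real.rpow_pos_of_pos hA0 _).le.trans hexp)
  calc _ ≤ _ := le_window_mass ha1 hd0 hd1 hA0 he₀ (hq.trans he₀sq.ge)
    _ ≤ K (fun ε => ε ^ (-a)) x n :=
      le_K_of_le_on_Icc (fun ε hε => (Real.rpow_pos_of_pos hε.1 _).le)
        ((intervalIntegral.integrableOn_Ioo_rpow_iff zero_lt_one).2 (by linarith)) hx he₀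
        (by nlinarith) (by nlinarith) hm

lemma tendsto_sqrt_mul_log_div_atTop (k : ℝ) :
    Tendsto (fun t => √(k * Real.log t / t)) atTop (𝓝 0) := by
  simpa [mul_div_assoc] using
    (Real.isLittleO_log_id_atTop.tendsto_div_nhds_zero.const_mul k).sqrt

lemma exists_frequently_le_of_lt_limsup {ι : Type*} {f : Filter ι} {u : ι → ℝ} {c : ℝ}
    (h : (c : EReal) < limsup (fun i => (u i : EReal)) f) :
    ∃ c' > c, ∃ᶠ i in f, c' ≤ u i := by
  obtain ⟨c', hc, hc'⟩ := EReal.exists_between_coe_real h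
  exact ⟨c', EReal.coe_lt_coe_iff.1 hc,
    (frequently_lt_of_lt_limsup (by isBoundedDefault) hc').mono fun i hi =>
      (EReal.coe_lt_coe_iff.1 hi).le⟩

lemma limsup_coe_eq_top_of_frequently_le {ι : Type*} {f : Filter ι} {u : ι → ℝ}
    (h : ∀ M : ℝ, ∃ᶠ i in f, M ≤ u i) : limsup (fun i => (u i : EReal)) f = ⊤ := by
  refine EReal.eq_top_iff_forall_lt _ |>.2 fun y => ?_
  have := le_limsup_of_frequently_le ((h (y + 1)).mono fun i hi => EReal.coe_le_coe_iff.2 hi)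
    (by isBoundedDefault)
  exact (EReal.coe_lt_coe_iff.2 (lt_add_one y)).trans_le this

theorem power_prior_rate (a : ℝ) (ha : a ∈ Set.Ioo (0 : ℝ) 1)
    (x : ℕ → ℝ) (hx : ∀ i, -1 ≤ x i)
    (hA : Filter.Tendsto (A2 x) Filter.atTop Filter.atTop)
    (hls : 1 < Filter.limsup
      (fun n => ((S x n / Real.sqrt ((1 - a) * A2 x n * Real.log (A2 x n)) : ℝ) : EReal))
      Filter.atTop) :
    Filter.limsup (fun n => ((K (fun ε => ε ^ (-a)) x n : ℝ) : EReal)) Filter.atTop = ⊤ := by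
  obtain ⟨ha0, ha1⟩ := ha
  have h1a : 0 < 1 - a := sub_pos.2 ha1
  obtain ⟨c, hc1, hfreq⟩ := exists_frequently_le_of_lt_limsup (c := 1) (by exact_mod_cast hls)
  set d := min (c - 1) 1
  have hd0 : 0 < d := lt_min (by linarith) one_pos
  have hS : ∃ᶠ n in atTop, 1 + d ≤ S x n / √((1 - a) * A2 x n * Real.log (A2 x n)) :=
    hfreq.mono fun n hn => by linarith [min_le_left (c - 1) 1]
  have hsmall : ∀ᶠ n in atTop, √((1 - a) * Real.log (A2 x n) / A2 x n) ≤ d / 16 :=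
    (((tendsto_sqrt_mul_log_div_atTop (1 - a)).comp hA).eventually_lt_const
      (by positivity)).mono fun n hn => hn.le
  have hgrowth : Tendsto (fun n => d / 16 * (1 - a) ^ ((1 - a) / 2) * A2 x n ^ ((1 - a) * d / 2))
      atTop atTop :=
    ((tendsto_rpow_atTop (by positivity)).comp hA).const_mul_atTop (by positivity)
  refine limsup_coe_eq_top_of_frequently_le fun M => ?_
  refine (((hA.eventually_ge_atTop (Real.exp 1)).and (hsmall.and
    (hgrowth.eventually_ge_atTop M))).and_frequently hS).mono ?_
  rintro n ⟨⟨hAn, hsmalln, hMn⟩, hSn⟩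
  exact hMn.trans (le_K_rpow_neg ha0.le ha1 hd0 (min_le_right _ _) hx hAn hsmalln hSn)
end
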